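/- Suppose K is self-adjoint and N = G + G* − D*∘K∘D is positive semidefinite. Let sequences (w^k) and (w̃^k) in W satisfy, for every k, the prediction variational inequality φ(u₀) − φ(ũ₀^k) + ⟨w − w̃^k, F(w̃^k) + G(w̃^k − w^k)⟩ ≥ 0 for all w = (u₀, p) ∈ W, and the correction step w^{k+1} = w^k − D(w^k − w̃^k). Then the sequence (‖D(w^k − w̃^k)‖²_K)_{k≥0} is non-increasing: ‖D(w^{k+1} − w̃^{k+1})‖²_K ≤ ‖D(w^k − w̃^k)‖²_K for all k ≥ 0. -/
import Mathlib


open scoped InnerProductSpace RealInnerProductSpace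

noncomputable section

/-- The product space `W = H × H` equipped with the Hilbert space structure
`⟨(u,p),(u',p')⟩ = ⟨u,u'⟩ + ⟨p,p'⟩`. -/
abbrev W (H : Type*) [NormedAddCommGroup H] [InnerProductSpace ℝ H] := WithLp 2 (H × H)

/-- The canonical (linear homeomorphism) identification of `W` with the plain product. -/
def eW (H : Type*) [NormedAddCommGroup H] [InnerProductSpace ℝ H] :
    W H ≃L[ℝ] H × H := WithLp.prodContinuousLinearEquiv 2 ℝ H H

variable {H : Type*} [NormedAddCommGroup H] [InnerProductSpace ℝ H] [CompleteSpace H]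

/-- The block diagonal operator `D(u,p) = (ρu, σp)` on `W`. -/
def opD (H : Type*) [NormedAddCommGroup H] [InnerProductSpace ℝ H] (ρ σ : ℝ) :
    W H →L[ℝ] W H :=
  ((eW H).symm.toContinuousLinearMap.comp
    ((ρ • ContinuousLinearMap.fst ℝ H H).prod (σ • ContinuousLinearMap.snd ℝ H H))).comp
    (eW H).toContinuousLinearMap

/-- The block operator `G(u,p) = ((1/r)u − ℒ*p, −θℒu + (1/s)p)` on `W`. -/
def opG (L : H →L[ℝ] H) (r s θ : ℝ) : W H →L[ℝ] W H :=
  ((eW H).symm.toContinuousLinearMap.comp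
    (((1 / r) • ContinuousLinearMap.fst ℝ H H
        - (ContinuousLinearMap.adjoint L).comp (ContinuousLinearMap.snd ℝ H H)).prod
      ((-θ) • (L.comp (ContinuousLinearMap.fst ℝ H H))
        + (1 / s) • ContinuousLinearMap.snd ℝ H H))).comp
    (eW H).toContinuousLinearMap

/-- The operator `K = G ∘ D⁻¹`. -/
def opK (L : H →L[ℝ] H) (r s θ ρ σ : ℝ) : W H →L[ℝ] W H :=
  (opG L r s θ).comp (opD H ρ⁻¹ σ⁻¹)

/-- The operator `N = G + G* − D* ∘ K ∘ D`. -/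
def opN (L : H →L[ℝ] H) (r s θ ρ σ : ℝ) : W H →L[ℝ] W H :=
  opG L r s θ + ContinuousLinearMap.adjoint (opG L r s θ)
    - ((ContinuousLinearMap.adjoint (opD H ρ σ)).comp
        ((opK L r s θ ρ σ).comp (opD H ρ σ)))

/-- The map `F(u₀, p) = (τu₀ + ℒ*p, p − ℒu₀ + u_T)` on `W`. -/
def Fmap (L : H →L[ℝ] H) (uT : H) (τ : ℝ) : W H → W H := fun w =>
  (eW H).symm (τ • ((eW H) w).1 + ContinuousLinearMap.adjoint L ((eW H) w).2,
               ((eW H) w).2 - L ((eW H) w).1 + uT)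

/-- `‖w‖²_A = ⟨Aw, w⟩` for an operator `A` on `W`. -/
def normSq (A : W H →L[ℝ] W H) (w : W H) : ℝ := ⟪A w, w⟫_ℝ

/-- A saddle point `w* = (u₀*, p*)`: `φ(u₀) − φ(u₀*) + ⟨w − w*, F(w*)⟩ ≥ 0` for all `w`. -/
def IsSaddle (L : H →L[ℝ] H) (uT : H) (τ : ℝ) (φ : H → ℝ) (wstar : W H) : Prop :=
  ∀ w : W H, φ ((eW H w).1) - φ ((eW H wstar).1)
      + ⟪w - wstar, Fmap L uT τ wstar⟫_ℝ ≥ 0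

/-- The prediction variational inequality satisfied by `w̃` given `wᵏ`:
`φ(u₀) − φ(ũ₀) + ⟨w − w̃, F(w̃) + G(w̃ − wᵏ)⟩ ≥ 0` for all `w`. -/
def PredVI (L : H →L[ℝ] H) (uT : H) (τ : ℝ) (φ : H → ℝ) (r s θ : ℝ)
    (wk wt : W H) : Prop :=
  ∀ w : W H, φ ((eW H w).1) - φ ((eW H wt).1)
      + ⟪w - wt, Fmap L uT τ wt + opG L r s θ (wt - wk)⟫_ℝ ≥ 0

end


section AuxLemmas
open scoped InnerProductSpace RealInnerProductSpace
variable {H : Type*} [NormedAddCommGroup H] [InnerProductSpace ℝ H] [CompleteSpace H]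

lemma opKD (L : H →L[ℝ] H) (r s θ ρ σ : ℝ) (hρ : ρ ≠ 0) (hσ : σ ≠ 0) (x : W H) :
    opK L r s θ ρ σ (opD H ρ σ x) = opG L r s θ x := by
  have h : opD H ρ⁻¹ σ⁻¹ (opD H ρ σ x) = x := by
    show (eW H).symm (ρ⁻¹ • (eW H ((eW H).symm (ρ • (eW H x).1, σ • (eW H x).2))).1,
      σ⁻¹ • (eW H ((eW H).symm (ρ • (eW H x).1, σ • (eW H x).2))).2) = x
    rw [ContinuousLinearEquiv.apply_symm_apply]
    simp [smul_smul, inv_mul_cancel₀ hρ, inv_mul_cancel₀ hσ]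
  show opG L r s θ (opD H ρ⁻¹ σ⁻¹ (opD H ρ σ x)) = _
  rw [h]

lemma Fmono (L : H →L[ℝ] H) (uT : H) (τ : ℝ) (hτ : 0 ≤ τ) (x y : W H) :
    0 ≤ ⟪x - y, Fmap L uT τ x - Fmap L uT τ y⟫_ℝ := by
  have hd : Fmap L uT τ x - Fmap L uT τ y =
      (eW H).symm (τ • ((eW H x).1 - (eW H y).1)
          + ContinuousLinearMap.adjoint L ((eW H x).2 - (eW H y).2),
        ((eW H x).2 - (eW H y).2) - L ((eW H x).1 - (eW H y).1)) := by
    show (eW H).symm _ - (eW H).symm _ = _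
    rw [← map_sub]
    congr 1
    simp [Prod.sub_def, smul_sub, map_sub]
    exact ⟨by abel, by abel⟩
  set u := (eW H x).1 - (eW H y).1
  set p := (eW H x).2 - (eW H y).2
  have hxy : x - y = (eW H).symm (u, p) := by
    apply (eW H).injective; simp [u, p, Prod.sub_def]
  rw [hd, hxy]
  have : ⟪(eW H).symm (u, p), (eW H).symm (τ • u + ContinuousLinearMap.adjoint L p, p - L u)⟫_ℝ
      = ⟪u, τ • u + ContinuousLinearMap.adjoint L p⟫_ℝ + ⟪p, p - L u⟫_ℝ := rfl
  rw [this, inner_add_right, inner_sub_right, ContinuousLinearMap.adjoint_inner_right,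
    real_inner_smul_right, real_inner_comm (L u) p]
  have h1 : 0 ≤ τ * ⟪u, u⟫_ℝ := mul_nonneg hτ real_inner_self_nonneg
  have h2 : 0 ≤ ⟪p, p⟫_ℝ := real_inner_self_nonneg
  linarith

end AuxLemmas


/-- Monotonicity of the residual: if `K` is self-adjoint and `N` is positive semidefinite,
then the sequence `(‖D(wᵏ − w̃ᵏ)‖²_K)` is non-increasing. -/

theorem residual_nonincreasing
    {H : Type*} [NormedAddCommGroup H] [InnerProductSpace ℝ H] [CompleteSpace H]
    (L : H →L[ℝ] H) (uT : H) (τ β : ℝ) (hτ : 0 < τ) (hβ : 0 ≤ β)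
    (φ : H → ℝ) (hφ : ConvexOn ℝ Set.univ φ)
    (r s θ ρ σ : ℝ) (hr : 0 < r) (hs : 0 < s) (hθ : θ ∈ Set.Ioc (0 : ℝ) 1)
    (hρ : 0 < ρ) (hσ : 0 < σ)
    (hKsa : IsSelfAdjoint (opK L r s θ ρ σ))
    (hNpsd : ∀ w : W H, 0 ≤ ⟪opN L r s θ ρ σ w, w⟫_ℝ)
    (w wt : ℕ → W H)
    (hVI : ∀ k : ℕ, PredVI L uT τ φ r s θ (w k) (wt k))
    (hcorr : ∀ k : ℕ, w (k + 1) = w k - opD H ρ σ (w k - wt k)) :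
    ∀ k : ℕ,
      normSq (opK L r s θ ρ σ) (opD H ρ σ (w (k + 1) - wt (k + 1)))
        ≤ normSq (opK L r s θ ρ σ) (opD H ρ σ (w k - wt k)) := by
  intro k
  have hτ' : (0:ℝ) ≤ τ := le_of_lt hτ
  set K := opK L r s θ ρ σ with hKdef
  set G := opG L r s θ with hGdef
  set Dm := opD H ρ σ with hDdef
  set a := w k - wt k with ha
  set b := w (k + 1) - wt (k + 1) with hb
  set c := a - b with hc
  -- from the two variational inequalities
  have h1 := hVI k (wt (k + 1))
  have h2 := hVI (k + 1) (wt k)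
  unfold PredVI at h1 h2
  have hxwk : wt k - w k = -a := by rw [ha]; abel
  have hywk : wt (k + 1) - w (k + 1) = -b := by rw [hb]; abel
  rw [hxwk] at h1
  rw [hywk] at h2
  set x := wt k
  set y := wt (k + 1)
  set Fx := Fmap L uT τ x with hFx
  set Fy := Fmap L uT τ y with hFy
  have e1 : ⟪y - x, Fx + G (-a)⟫_ℝ = -⟪x - y, Fx⟫_ℝ + ⟪x - y, G a⟫_ℝ := by
    rw [show y - x = -(x - y) by abel, inner_neg_left, inner_add_right, map_neg,
      inner_neg_right]
    ring
  have e2 : ⟪x - y, Fy + G (-b)⟫_ℝ = ⟪x - y, Fy⟫_ℝ - ⟪x - y, G b⟫_ℝ := by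
    rw [inner_add_right, map_neg, inner_neg_right]; ring
  have hGc : ⟪x - y, G c⟫_ℝ = ⟪x - y, G a⟫_ℝ - ⟪x - y, G b⟫_ℝ := by
    rw [hc, map_sub, inner_sub_right]
  have hmono : 0 ≤ ⟪x - y, Fx - Fy⟫_ℝ := Fmono L uT τ hτ' x y
  have hFxy : ⟪x - y, Fx - Fy⟫_ℝ = ⟪x - y, Fx⟫_ℝ - ⟪x - y, Fy⟫_ℝ := inner_sub_right _ _ _
  have hkey : 0 ≤ ⟪x - y, G c⟫_ℝ := by rw [e1] at h1; rw [e2] at h2; linarith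
  -- x - y = Dm a - c
  have hxy : x - y = Dm a - c := by
    have h := hcorr k
    rw [hc, ha, hb, h]
    abel
  have hkey2 : ⟪c, G c⟫_ℝ ≤ ⟪Dm a, G c⟫_ℝ := by
    rw [hxy, inner_sub_left] at hkey; linarith
  -- self-adjointness of K
  have hadj : ContinuousLinearMap.adjoint K = K :=
    ContinuousLinearMap.isSelfAdjoint_iff'.mp hKsa
  have hsa : ∀ u v : W H, ⟪K u, v⟫_ℝ = ⟪u, K v⟫_ℝ := fun u v => by
    conv_lhs => rw [← hadj]
    rw [ContinuousLinearMap.adjoint_inner_left]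
  -- K ∘ D = G
  have hKD : ∀ z : W H, K (Dm z) = G z := fun z =>
    opKD L r s θ ρ σ (ne_of_gt hρ) (ne_of_gt hσ) z
  -- N positive semidefiniteness, expanded
  have hN : ⟪G c, c⟫_ℝ + ⟪c, G c⟫_ℝ - ⟪K (Dm c), Dm c⟫_ℝ
      = ⟪opN L r s θ ρ σ c, c⟫_ℝ := by
    simp only [opN, ContinuousLinearMap.sub_apply, ContinuousLinearMap.add_apply,
      ContinuousLinearMap.comp_apply, inner_sub_left, inner_add_left,
      ContinuousLinearMap.adjoint_inner_left, ← hKdef, ← hGdef, ← hDdef]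
  have hNc : 0 ≤ ⟪G c, c⟫_ℝ + ⟪c, G c⟫_ℝ - ⟪K (Dm c), Dm c⟫_ℝ := by
    rw [hN]; exact hNpsd c
  -- final algebra
  have hDb : Dm b = Dm a - Dm c := by
    rw [← map_sub]
    congr 1
    rw [hc]; abel
  unfold normSq
  rw [hDb, map_sub, inner_sub_left, inner_sub_right, inner_sub_right]
  have hs1 : ⟪K (Dm a), Dm c⟫_ℝ = ⟪K (Dm c), Dm a⟫_ℝ := by
    rw [hsa, real_inner_comm]
  have hs2 : ⟪K (Dm c), Dm a⟫_ℝ = ⟪G c, Dm a⟫_ℝ := by rw [hKD]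
  have hs3 : ⟪G c, Dm a⟫_ℝ = ⟪Dm a, G c⟫_ℝ := real_inner_comm _ _
  have hs4 : ⟪G c, c⟫_ℝ = ⟪c, G c⟫_ℝ := real_inner_comm _ _
  linarith
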